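/- arXiv:1608.05872 — 3 statements merged into one kernel-verified Lean document; each statement's English description precedes it below -/
import Mathlib

section
/- Let B ⊂ 𝔻 be a horoball (a Euclidean disk internally tangent to the unit circle) with 0 ∈ ∂B. Then the integral ∫_B (1/π) log(1/|z|) · (2/(1-|z|²))² dA(z) is finite. Consequently, the expected total time hyperbolic Brownian motion started at a boundary point of a horoball spends inside that horoball is a finite constant independent of the horoball (by conformal invariance). -/
open MeasureTheory Complex Set

noncomputable section

/-- Density of the Poincaré metric on the unit disk. -/
def rho (z : ℂ) : ℝ := 2 / (1 - ‖z‖ ^ 2)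

/-- The Green's function of hyperbolic Brownian motion based at `0`, multiplied by the
hyperbolic area density: the integrand `g_∞(z) ρ(z)²`. -/
def greenDensity (z : ℂ) : ℝ := (1 / Real.pi) * Real.log (1 / ‖z‖) * rho z ^ 2

/-! A horoball whose boundary passes through `0` has radius `1/2` and centre on the circle
`‖c‖ = 1/2`, so it is the image of `ball (1/2) (1/2)` under a linear isometry; as `greenDensity`
is radial, all these integrals coincide.

On `ball (1/2) (1/2)` put `x = re z`. Then `‖z‖² < x ≤ ‖z‖`, so `log (1/‖z‖) ≤ 1/x - 1` and
`1 - ‖z‖² > 1 - x`, whence `greenDensity z ≤ 4 / (π x (1 - x))`. The vertical slice of the disk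
over `x` has length `2 √(x - x²)`, so by Tonelli the integral is at most
`(8/π) ∫₀¹ (x - x²)^(-1/2) dx`, which is finite because the integrand is the derivative of
`arcsin (2x - 1)`. -/

open scoped ENNReal
open Real Metric

section Radial

theorem exists_linearIsometryEquiv_apply_eq {E : Type*} [NormedAddCommGroup E]
    [InnerProductSpace ℝ E] {x y : E} (h : ‖x‖ = ‖y‖) : ∃ e : E ≃ₗᵢ[ℝ] E, e x = y :=
  ⟨_, Submodule.reflection_sub h⟩

variable {E F : Type*} [NormedAddCommGroup E] [InnerProductSpace ℝ E] [FiniteDimensional ℝ E]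
  [MeasurableSpace E] [BorelSpace E] [NormedAddCommGroup F]

theorem integrableOn_ball_iff_of_norm_eq {f : E → F} (hf : ∀ x y, ‖x‖ = ‖y‖ → f x = f y)
    {c c' : E} (hc : ‖c‖ = ‖c'‖) (r : ℝ) :
    IntegrableOn f (ball c r) ↔ IntegrableOn f (ball c' r) := by
  obtain ⟨e, rfl⟩ := exists_linearIsometryEquiv_apply_eq hc
  rw [← e.image_ball, e.measurePreserving.integrableOn_image e.toHomeomorph.measurableEmbedding]
  exact integrableOn_congr_fun (fun x _ => hf _ _ (e.norm_map x)) measurableSet_ball |>.symm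

theorem setIntegral_ball_eq_of_norm_eq [NormedSpace ℝ F] {f : E → F}
    (hf : ∀ x y, ‖x‖ = ‖y‖ → f x = f y) {c c' : E} (hc : ‖c‖ = ‖c'‖) (r : ℝ) :
    ∫ x in ball c r, f x = ∫ x in ball c' r, f x := by
  obtain ⟨e, rfl⟩ := exists_linearIsometryEquiv_apply_eq hc
  rw [← e.image_ball, e.measurePreserving.setIntegral_image_emb e.toHomeomorph.measurableEmbedding]
  exact setIntegral_congr_fun measurableSet_ball fun x _ => (hf _ _ (e.norm_map x)).symm

end Radial

theorem setLIntegral_prod_comp_fst {α β : Type*} [MeasurableSpace α] [MeasurableSpace β]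
    {μ : Measure α} {ν : Measure β} [SFinite ν] {s : Set (α × β)} (hs : MeasurableSet s)
    {f : α → ℝ≥0∞} (hf : Measurable f) :
    ∫⁻ p in s, f p.1 ∂μ.prod ν = ∫⁻ x, f x * ν (Prod.mk x ⁻¹' s) ∂μ := by
  rw [← lintegral_indicator hs, lintegral_prod (s.indicator fun p => f p.1)
    ((hf.comp measurable_fst).indicator hs).aemeasurable]
  refine lintegral_congr fun x => ?_
  rw [← lintegral_indicator_const (measurable_prodMk_left hs)]
  rfl

theorem Complex.setLIntegral_ball_comp_re {c : ℂ} {r : ℝ} (hr : 0 ≤ r) {f : ℝ → ℝ≥0∞}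
    (hf : Measurable f) :
    ∫⁻ z in ball c r, f z.re = ∫⁻ x, f x * ENNReal.ofReal (2 * √(r ^ 2 - (x - c.re) ^ 2)) := by
  have hslice (x : ℝ) : Prod.mk x ⁻¹' (measurableEquivRealProd.symm ⁻¹' ball c r) =
      Ioo (c.im - √(r ^ 2 - (x - c.re) ^ 2)) (c.im + √(r ^ 2 - (x - c.re) ^ 2)) := by
    ext y
    have hnorm : ‖(⟨x, y⟩ : ℂ) - c‖ ^ 2 = (x - c.re) ^ 2 + (y - c.im) ^ 2 := by
      rw [Complex.sq_norm, Complex.normSq_apply, sub_re, sub_im]; ring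
    simp only [mem_preimage, measurableEquivRealProd_symm_apply, mem_ball, dist_eq, mem_Ioo]
    rw [← pow_lt_pow_iff_left₀ (norm_nonneg _) hr two_ne_zero, hnorm, ← lt_sub_iff_add_lt',
      Real.sq_lt]
    constructor <;> rintro ⟨h₁, h₂⟩ <;> constructor <;> linarith
  rw [← (volume_preserving_equiv_real_prod.symm _).setLIntegral_comp_preimage_emb
    (MeasurableEquiv.measurableEmbedding _), Measure.volume_eq_prod]
  simp only [measurableEquivRealProd_symm_apply]
  rw [setLIntegral_prod_comp_fst (measurableSet_ball.preimage (MeasurableEquiv.measurable _)) hf]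
  refine lintegral_congr fun x => ?_
  rw [hslice, Real.volume_Ioo]
  ring_nf

theorem hasDerivAt_arcsin_two_mul_sub_one {x : ℝ} (hx : x ∈ Ioo (0 : ℝ) 1) :
    HasDerivAt (fun t => arcsin (2 * t - 1)) (√(x - x ^ 2))⁻¹ x := by
  obtain ⟨hx₀, hx₁⟩ := hx
  have hlin : HasDerivAt (fun t : ℝ => 2 * t - 1) 2 x := by
    simpa using ((hasDerivAt_id x).const_mul 2).sub_const 1
  refine ((Real.hasDerivAt_arcsin (by linarith) (by linarith)).comp x hlin).congr_deriv ?_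
  rw [show 1 - (2 * x - 1) ^ 2 = 2 ^ 2 * (x - x ^ 2) by ring, Real.sqrt_mul (by norm_num),
    Real.sqrt_sq (by norm_num)]
  field_simp

theorem integrable_inv_sqrt_sub_sq : Integrable fun x : ℝ => (√(x - x ^ 2))⁻¹ := by
  have hsupp : (Function.support fun x : ℝ => (√(x - x ^ 2))⁻¹) ⊆ Ioc 0 1 := by
    refine Function.support_subset_iff'.2 fun x hx' => ?_
    rw [Real.sqrt_eq_zero'.2, inv_zero]
    simp only [mem_Ioc, not_and_or, not_lt, not_le] at hx'
    rcases hx' with h | h <;> nlinarith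
  refine (integrableOn_iff_integrable_of_support_subset hsupp).1 ?_
  exact intervalIntegral.integrableOn_deriv_of_nonneg (by fun_prop)
    (fun _ hx => hasDerivAt_arcsin_two_mul_sub_one hx) fun _ _ => by positivity

theorem greenDensity_eq_of_norm_eq (z w : ℂ) (h : ‖z‖ = ‖w‖) :
    greenDensity z = greenDensity w := by
  simp only [greenDensity, rho, h]

theorem measurable_greenDensity : Measurable greenDensity := by
  unfold greenDensity rho
  fun_prop

theorem Complex.mem_ball_half_iff {z : ℂ} : z ∈ ball (1 / 2 : ℂ) (1 / 2) ↔ ‖z‖ ^ 2 < z.re := by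
  have hre : (1 / 2 : ℂ).re = 1 / 2 := by norm_num
  have him : (1 / 2 : ℂ).im = 0 := by norm_num
  rw [mem_ball, dist_eq, ← pow_lt_pow_iff_left₀ (norm_nonneg _) (by norm_num) two_ne_zero,
    Complex.sq_norm, Complex.sq_norm, Complex.normSq_apply, Complex.normSq_apply, sub_re, sub_im,
    hre, him]
  constructor <;> intro h <;> linarith

theorem norm_greenDensity_le {z : ℂ} (hz : ‖z‖ ^ 2 < z.re) :
    ‖greenDensity z‖ ≤ 4 / π * (z.re - z.re ^ 2)⁻¹ := by
  set x := z.re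
  have hx : x ≤ ‖z‖ := Complex.re_le_norm z
  have hx₀ : 0 < x := by nlinarith [norm_nonneg z]
  have hz₁ : ‖z‖ < 1 := by nlinarith
  have ht₀ : 0 < ‖z‖ := hx₀.trans_le hx
  have hlog₀ : 0 ≤ Real.log (1 / ‖z‖) := Real.log_nonneg (by rw [le_div_iff₀ ht₀]; linarith)
  have hlog : Real.log (1 / ‖z‖) ≤ (1 - x) / x :=
    calc Real.log (1 / ‖z‖) ≤ 1 / ‖z‖ - 1 := Real.log_le_sub_one_of_pos (by positivity)
      _ ≤ 1 / x - 1 := by gcongr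
      _ = (1 - x) / x := by field_simp
  have hρ : 0 ≤ 2 / (1 - ‖z‖ ^ 2) := div_nonneg zero_le_two (by nlinarith)
  rw [Real.norm_of_nonneg (by unfold greenDensity rho; positivity)]
  calc greenDensity z = 1 / π * Real.log (1 / ‖z‖) * (2 / (1 - ‖z‖ ^ 2)) ^ 2 := rfl
    _ ≤ 1 / π * ((1 - x) / x) * (2 / (1 - x)) ^ 2 := by
      have : 0 ≤ (1 - x) / x := hlog₀.trans hlog
      gcongr
      linarith
    _ = 4 / π * (x - x ^ 2)⁻¹ := by
      have : 1 - x ≠ 0 := by linarith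
      field_simp
      ring

theorem integrableOn_greenDensity_ball_half :
    IntegrableOn greenDensity (ball (1 / 2 : ℂ) (1 / 2)) := by
  refine ⟨measurable_greenDensity.aestronglyMeasurable, ?_⟩
  have hbound : ∀ z ∈ ball (1 / 2 : ℂ) (1 / 2),
      ‖greenDensity z‖ₑ ≤ ENNReal.ofReal (4 / π * (z.re - z.re ^ 2)⁻¹) := fun z hz => by
    rw [← ofReal_norm]
    exact ENNReal.ofReal_le_ofReal (norm_greenDensity_le (Complex.mem_ball_half_iff.1 hz))
  calc ∫⁻ z in ball (1 / 2 : ℂ) (1 / 2), ‖greenDensity z‖ₑ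
      ≤ ∫⁻ z in ball (1 / 2 : ℂ) (1 / 2), ENNReal.ofReal (4 / π * (z.re - z.re ^ 2)⁻¹) :=
        setLIntegral_mono (by fun_prop) hbound
    _ = ∫⁻ x, ENNReal.ofReal (8 / π * (√(x - x ^ 2))⁻¹) := by
        rw [Complex.setLIntegral_ball_comp_re (f := fun x => ENNReal.ofReal (4 / π * (x - x ^ 2)⁻¹))
          (by norm_num) (by fun_prop)]
        refine lintegral_congr fun x => ?_
        have hslice : (1 / 2 : ℝ) ^ 2 - (x - (1 / 2 : ℂ).re) ^ 2 = x - x ^ 2 := by norm_num; ring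
        -- valid for every `x`: outside `(0, 1)` both sides are `0`, as `√` vanishes there
        have hsqrt := Real.sqrt_div_self' (x := x - x ^ 2)
        rw [div_eq_mul_inv, one_div] at hsqrt
        rw [hslice, ← ENNReal.ofReal_mul' (by positivity)]
        congr 1
        linear_combination (8 / π) * hsqrt
    _ < ⊤ := (integrable_inv_sqrt_sub_sq.const_mul _).lintegral_lt_top

/-- for a horoball `B = ball c r ⊆ 𝔻` (internally tangent to the unit
circle, i.e. `|c| = 1 - r`) whose boundary passes through the origin (`|c| = r`), the
integral `∫_B (1/π) log(1/|z|) ρ(z)² dA(z)` is finite; moreover its value is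
independent of the horoball: it is the same for all horoballs whose boundary contains
`0`.  This integral is the expected total time hyperbolic Brownian motion started at
a boundary point of a horoball spends inside the horoball (by conformal invariance). -/
theorem horoball_occupation_finite :
    (∀ (c : ℂ) (r : ℝ), 0 < r → ‖c‖ = 1 - r → ‖c‖ = r →
      IntegrableOn greenDensity (Metric.ball c r) volume) ∧
    (∀ (c c' : ℂ) (r r' : ℝ), 0 < r → ‖c‖ = 1 - r → ‖c‖ = r →
      0 < r' → ‖c'‖ = 1 - r' → ‖c'‖ = r' →
      ∫ z in Metric.ball c r, greenDensity z = ∫ z in Metric.ball c' r', greenDensity z) := by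
  have horoball {c : ℂ} {r : ℝ} (h₁ : ‖c‖ = 1 - r) (h₂ : ‖c‖ = r) :
      r = 1 / 2 ∧ ‖c‖ = ‖(1 / 2 : ℂ)‖ := by
    have hr : r = 1 / 2 := by linarith
    exact ⟨hr, by rw [h₂, hr]; norm_num⟩
  refine ⟨fun c r _ h₁ h₂ => ?_, fun c c' r r' _ h₁ h₂ _ h₁' h₂' => ?_⟩
  · obtain ⟨rfl, hc⟩ := horoball h₁ h₂
    exact (integrableOn_ball_iff_of_norm_eq greenDensity_eq_of_norm_eq hc _).2
      integrableOn_greenDensity_ball_half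
  · obtain ⟨rfl, hc⟩ := horoball h₁ h₂
    obtain ⟨rfl, hc'⟩ := horoball h₁' h₂'
    exact setIntegral_ball_eq_of_norm_eq greenDensity_eq_of_norm_eq (hc.trans hc'.symm) _
end
end

section
/- Let R > 0 and let B ⊂ 𝔻 be a horoball resting on the point 1 whose hyperbolic distance from the origin equals R/2. Then ∫_B (1/π) log(1/|z|) · (2/(1-|z|²))² dA(z) ≍ e^{-R/2}, i.e. there are absolute constants 0 < c ≤ C such that the integral lies in [c e^{-R/2}, C e^{-R/2}] for all sufficiently large R. -/
/-!
The horoball `B` of Euclidean radius `r` resting on `1` is at hyperbolic distance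
`log ((1 - r) / r)` from the origin, so `e^{-R/2} = r / (1 - r)` lies between `r` and `2r`.
On `B` the quantities `1 - |z|` and `1 - Re z` agree up to a factor `2` and are `< 2r`, while
`(1/π) log (1/|z|) ρ(z)²` is comparable to `1 / (1 - |z|)`. Below, the integrand is at least
`1 / (2πr)` on a disc of area `πr²`, giving `r / 2`. Above, it is at most `16 / (π (1 - Re z))`,
and `B` lies in the parabolic region `0 < 1 - Re z < 2r`, `(Im z)² < 2r (1 - Re z)`; integrating
first in `Im z` leaves `∫₀^{2r} 2 √(2rt) / t dt = 8r`.
-/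

open MeasureTheory Complex Set

noncomputable section

/-- Hyperbolic distance from the origin: `d_𝔻(0, z) = log((1 + |z|)/(1 - |z|))`. -/
def hypDist0 (z : ℂ) : ℝ := Real.log ((1 + ‖z‖) / (1 - ‖z‖))

/-- The horoball resting on `1` of Euclidean radius `r`. -/
def horoballAtOne (r : ℝ) : Set ℂ := Metric.ball ((1 - r : ℝ) : ℂ) r

open scoped ENNReal

theorem setLIntegral_regionBetween_fst {α : Type*} [MeasurableSpace α] {μ : Measure α}
    {f g : α → ℝ} {s : Set α} (hf : Measurable f) (hg : Measurable g) (hs : MeasurableSet s)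
    {φ : α → ℝ≥0∞} (hφ : Measurable φ) :
    ∫⁻ p in regionBetween f g s, φ p.1 ∂μ.prod volume
      = ∫⁻ x in s, φ x * ENNReal.ofReal (g x - f x) ∂μ := by
  rw [← withDensity_apply _ (measurableSet_regionBetween hf hg hs), ← prod_withDensity_left hφ,
    volume_regionBetween_eq_lintegral' hf hg hs,
    setLIntegral_withDensity_eq_setLIntegral_mul _ hφ (by fun_prop) hs]
  rfl

theorem lintegral_Ioo_rpow {a s : ℝ} (ha : 0 ≤ a) (hs : -1 < s) :
    ∫⁻ x in Ioo 0 a, ENNReal.ofReal (x ^ s) = ENNReal.ofReal (a ^ (s + 1) / (s + 1)) := by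
  have hint : IntegrableOn (fun x : ℝ ↦ x ^ s) (Ioo 0 a) :=
    (intervalIntegrable_iff_integrableOn_Ioo_of_le ha).1
      (intervalIntegral.intervalIntegrable_rpow' hs)
  rw [← ofReal_integral_eq_lintegral_ofReal hint
      ((ae_restrict_iff' measurableSet_Ioo).2 (ae_of_all _ fun x hx ↦ Real.rpow_nonneg hx.1.le s)),
    ← integral_Ioc_eq_integral_Ioo, ← intervalIntegral.integral_of_le ha, integral_rpow (.inl hs),
    Real.zero_rpow (by linarith), sub_zero]

theorem lintegral_inv_re_parabola {a b : ℝ} (ha : 0 ≤ a) (hb : 0 ≤ b) :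
    ∫⁻ w in {w : ℂ | 0 < w.re ∧ w.re < a ∧ w.im ^ 2 < b * w.re}, ENNReal.ofReal w.re⁻¹
      = ENNReal.ofReal (4 * √(a * b)) := by
  have hφ : Measurable fun x : ℝ ↦ ENNReal.ofReal x⁻¹ := by fun_prop
  have hS : MeasurableSet (regionBetween (fun x ↦ -√(b * x)) (fun x ↦ √(b * x)) (Ioo 0 a)) :=
    measurableSet_regionBetween (by fun_prop) (by fun_prop) measurableSet_Ioo
  have hset : {w : ℂ | 0 < w.re ∧ w.re < a ∧ w.im ^ 2 < b * w.re}
      = measurableEquivRealProd ⁻¹'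
          regionBetween (fun x ↦ -√(b * x)) (fun x ↦ √(b * x)) (Ioo 0 a) := by
    ext w
    simp [regionBetween, Real.sq_lt, and_assoc]
  rw [hset]
  refine (volume_preserving_equiv_real_prod.setLIntegral_comp_preimage hS
    (f := fun p : ℝ × ℝ ↦ ENNReal.ofReal p.1⁻¹) (by fun_prop)).trans ?_
  rw [Measure.volume_eq_prod,
    setLIntegral_regionBetween_fst (by fun_prop) (by fun_prop) measurableSet_Ioo hφ]
  calc ∫⁻ x in Ioo 0 a, ENNReal.ofReal x⁻¹ * ENNReal.ofReal (√(b * x) - -√(b * x))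
      = ∫⁻ x in Ioo 0 a, ENNReal.ofReal (2 * √b) * ENNReal.ofReal (x ^ (-(1 / 2) : ℝ)) := by
        refine setLIntegral_congr_fun measurableSet_Ioo fun x hx ↦ ?_
        rw [← ENNReal.ofReal_mul (inv_nonneg.2 hx.1.le), ← ENNReal.ofReal_mul (by positivity)]
        congr 1
        rw [Real.rpow_neg hx.1.le, ← Real.sqrt_eq_rpow, Real.sqrt_mul hb]
        nth_rw 1 [← Real.sq_sqrt hx.1.le]
        field_simp
        ring
    _ = ENNReal.ofReal (4 * √(a * b)) := by
        rw [lintegral_const_mul _ (by fun_prop), lintegral_Ioo_rpow ha (by norm_num),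
          ← ENNReal.ofReal_mul (by positivity), Real.sqrt_mul ha, Real.sqrt_eq_rpow a]
        congr 1
        norm_num
        ring

theorem inv_one_sub_le_log_inv_mul_sq {x : ℝ} (hx₀ : 0 < x) (hx₁ : x < 1) :
    (1 - x)⁻¹ ≤ Real.log (1 / x) * (2 / (1 - x ^ 2)) ^ 2 := by
  have hlog : 1 - x ≤ Real.log (1 / x) := by
    rw [one_div, Real.log_inv]
    linarith [Real.log_le_sub_one_of_pos hx₀]
  have hrho : (1 - x)⁻¹ ≤ 2 / (1 - x ^ 2) := by
    rw [inv_eq_one_div, div_le_div_iff₀ (by linarith) (by nlinarith)]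
    nlinarith
  calc (1 - x)⁻¹ = (1 - x) * ((1 - x)⁻¹) ^ 2 := by field_simp
    _ ≤ Real.log (1 / x) * (2 / (1 - x ^ 2)) ^ 2 := by
        gcongr
        linarith

theorem log_inv_mul_sq_le {x : ℝ} (hx₀ : 1 / 2 ≤ x) (hx₁ : x < 1) :
    Real.log (1 / x) * (2 / (1 - x ^ 2)) ^ 2 ≤ 8 * (1 - x)⁻¹ := by
  have hx : 0 < x := by linarith
  have hlog : Real.log (1 / x) ≤ 2 * (1 - x) := by
    have := Real.log_le_sub_one_of_pos (one_div_pos.2 hx)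
    have : 1 / x - 1 ≤ 2 * (1 - x) := by
      rw [div_sub_one hx.ne', div_le_iff₀ hx]
      nlinarith
    linarith
  have hrho : 2 / (1 - x ^ 2) ≤ 2 * (1 - x)⁻¹ := by
    rw [← div_eq_mul_inv, div_le_div_iff₀ (by nlinarith) (by linarith)]
    nlinarith
  have hlog₀ : 0 ≤ Real.log (1 / x) := Real.log_nonneg (by rw [le_div_iff₀ hx]; linarith)
  calc Real.log (1 / x) * (2 / (1 - x ^ 2)) ^ 2 ≤ 2 * (1 - x) * (2 * (1 - x)⁻¹) ^ 2 := by
        gcongr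
        exact div_nonneg zero_le_two (by nlinarith)
    _ = 8 * (1 - x)⁻¹ := by
        field_simp [show 1 - x ≠ 0 by linarith]
        ring

theorem norm_image_ball {E : Type*} [NormedAddCommGroup E] [NormedSpace ℝ E] {c : E} {r : ℝ}
    (hr : r ≤ ‖c‖) : norm '' Metric.ball c r = Ioo (‖c‖ - r) (‖c‖ + r) := by
  ext y
  constructor
  · rintro ⟨z, hz, rfl⟩
    have := (abs_norm_sub_norm_le z c).trans_lt (mem_ball_iff_norm.1 hz)
    exact ⟨by linarith [neg_abs_le (‖z‖ - ‖c‖)], by linarith [le_abs_self (‖z‖ - ‖c‖)]⟩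
  · rintro ⟨hy₁, hy₂⟩
    have hc : 0 < ‖c‖ := by linarith
    refine ⟨(y / ‖c‖) • c, ?_, ?_⟩
    · rw [mem_ball_iff_norm, show (y / ‖c‖) • c - c = (y / ‖c‖ - 1) • c by
        rw [sub_smul, one_smul], norm_smul, Real.norm_eq_abs,
        ← abs_of_pos hc, ← abs_mul, abs_of_pos hc, sub_mul, div_mul_cancel₀ _ hc.ne', one_mul,
        abs_sub_lt_iff]
      constructor <;> linarith
    · rw [norm_smul, Real.norm_eq_abs, abs_of_pos (div_pos (by linarith) hc),
        div_mul_cancel₀ _ hc.ne']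

theorem norm_image_horoballAtOne {r : ℝ} (hr : r ≤ 1 / 2) :
    norm '' horoballAtOne r = Ioo (1 - 2 * r) 1 := by
  rw [horoballAtOne, norm_image_ball] <;>
    rw [Complex.norm_real, Real.norm_of_nonneg (by linarith)]
  · ring_nf
  · linarith

theorem norm_mem_Ioo_of_mem_horoballAtOne {r : ℝ} (hr : r ≤ 1 / 2) {z : ℂ}
    (hz : z ∈ horoballAtOne r) : ‖z‖ ∈ Ioo (1 - 2 * r) 1 :=
  norm_image_horoballAtOne hr ▸ mem_image_of_mem _ hz

theorem sInf_hypDist0_image_horoballAtOne {r : ℝ} (hr₀ : 0 < r) (hr : r ≤ 1 / 2) :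
    sInf (hypDist0 '' horoballAtOne r) = Real.log ((1 - r) / r) := by
  set φ : ℝ → ℝ := fun x ↦ Real.log ((1 + x) / (1 - x))
  have himage : hypDist0 '' horoballAtOne r = φ '' Ioo (1 - 2 * r) 1 := by
    rw [← norm_image_horoballAtOne hr, image_image]
    rfl
  have hmono : MonotoneOn φ (Ioo (1 - 2 * r) 1) :=
    (Real.strictMonoOn_log.comp Real.strictMonoOn_one_add_div_one_sub fun x hx ↦
      show 0 < (1 + x) / (1 - x) from div_pos (by linarith [hx.1]) (by linarith [hx.2])
      ).monotoneOn.mono (Ioo_subset_Ioo_left (by linarith))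
  have hcont : ContinuousAt φ (1 - 2 * r) := by
    refine ContinuousAt.log ?_ (div_pos (by linarith) (by linarith)).ne'
    exact continuousAt_const.add continuousAt_id |>.div
      (continuousAt_const.sub continuousAt_id) (by linarith)
  have hIoo : sInf (Ioo (1 - 2 * r) 1) = 1 - 2 * r := csInf_Ioo (by linarith)
  rw [himage, ← hmono.map_csInf_of_continuousWithinAt
    (by rw [hIoo]; exact hcont.continuousWithinAt) (nonempty_Ioo.2 (by linarith)) bddBelow_Ioo,
    hIoo]
  show Real.log ((1 + (1 - 2 * r)) / (1 - (1 - 2 * r))) = _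
  congr 1
  field_simp
  ring

theorem mem_horoballAtOne_iff {r : ℝ} (hr : 0 < r) {z : ℂ} :
    z ∈ horoballAtOne r ↔ z.im ^ 2 < (1 - z.re) * (2 * r - (1 - z.re)) := by
  rw [horoballAtOne, Metric.mem_ball, Complex.dist_eq_re_im, Real.sqrt_lt' hr]
  simp only [Complex.ofReal_re, Complex.ofReal_im]
  constructor <;> intro h <;> nlinarith

theorem one_sub_re_le_two_mul_one_sub_norm {r : ℝ} (hr₀ : 0 < r) (hr : r ≤ 1 / 2) {z : ℂ}
    (hz : z ∈ horoballAtOne r) : 1 - z.re ≤ 2 * (1 - ‖z‖) := by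
  have him := (mem_horoballAtOne_iff hr₀).1 hz
  have hnorm : ‖z‖ ^ 2 = z.re ^ 2 + z.im ^ 2 := by
    rw [Complex.sq_norm, Complex.normSq_apply]
    ring
  have ht : 0 < 1 - z.re := by nlinarith [sq_nonneg z.im]
  have hsq : ‖z‖ ^ 2 < (1 - (1 - z.re) / 2) ^ 2 := by
    nlinarith [mul_nonneg ht.le (by linarith : (0 : ℝ) ≤ 1 - 2 * r)]
  have := lt_of_pow_lt_pow_left₀ 2 (by nlinarith [sq_nonneg z.im]) hsq
  linarith

theorem horoballAtOne_subset_parabola {r : ℝ} (hr₀ : 0 < r) :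
    horoballAtOne r ⊆
      (1 - ·) ⁻¹' {w : ℂ | 0 < w.re ∧ w.re < 2 * r ∧ w.im ^ 2 < 2 * r * w.re} := by
  intro z hz
  have him := (mem_horoballAtOne_iff hr₀).1 hz
  simp only [mem_preimage, mem_ofPred_eq, sub_re, one_re, sub_im, one_im, zero_sub, even_two,
    Even.neg_pow]
  refine ⟨?_, ?_, ?_⟩ <;> nlinarith [sq_nonneg z.im, sq_nonneg (1 - z.re)]

def greenWeight (z : ℂ) : ℝ := (1 / Real.pi) * Real.log (1 / ‖z‖) * rho z ^ 2

theorem measurable_greenWeight : Measurable greenWeight := by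
  unfold greenWeight rho
  fun_prop

theorem inv_two_pi_mul_le_greenWeight {r : ℝ} (hr : r ≤ 1 / 2) {z : ℂ}
    (hz : z ∈ horoballAtOne r) : (2 * Real.pi * r)⁻¹ ≤ greenWeight z := by
  obtain ⟨hlow, hup⟩ := norm_mem_Ioo_of_mem_horoballAtOne hr hz
  have hx : 0 < ‖z‖ := by linarith
  calc (2 * Real.pi * r)⁻¹ = (1 / Real.pi) * (2 * r)⁻¹ := by ring
    _ ≤ (1 / Real.pi) * (1 - ‖z‖)⁻¹ := by gcongr; linarith
    _ ≤ (1 / Real.pi) * (Real.log (1 / ‖z‖) * (2 / (1 - ‖z‖ ^ 2)) ^ 2) := by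
        gcongr
        exact inv_one_sub_le_log_inv_mul_sq hx hup
    _ = greenWeight z := by rw [greenWeight, rho, mul_assoc]

theorem greenWeight_le {r : ℝ} (hr₀ : 0 < r) (hr : r ≤ 1 / 4) {z : ℂ}
    (hz : z ∈ horoballAtOne r) : greenWeight z ≤ 16 / Real.pi * (1 - z).re⁻¹ := by
  obtain ⟨hlow, hup⟩ := norm_mem_Ioo_of_mem_horoballAtOne (by linarith) hz
  have hre := one_sub_re_le_two_mul_one_sub_norm hr₀ (by linarith) hz
  have ht : 0 < 1 - z.re := by nlinarith [Complex.re_le_norm z]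
  calc greenWeight z = (1 / Real.pi) * (Real.log (1 / ‖z‖) * (2 / (1 - ‖z‖ ^ 2)) ^ 2) := by
        rw [greenWeight, rho, mul_assoc]
    _ ≤ (1 / Real.pi) * (8 * (1 - ‖z‖)⁻¹) :=
        mul_le_mul_of_nonneg_left (log_inv_mul_sq_le (by linarith) hup) (by positivity)
    _ ≤ (1 / Real.pi) * (8 * ((1 - z.re) / 2)⁻¹) := by
        gcongr
        linarith
    _ = 16 / Real.pi * (1 - z).re⁻¹ := by
        rw [sub_re, one_re, inv_div]
        ring

theorem ofReal_le_lintegral_greenWeight {r : ℝ} (hr₀ : 0 < r) (hr : r ≤ 1 / 2) :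
    ENNReal.ofReal (r / 2) ≤ ∫⁻ z in horoballAtOne r, ENNReal.ofReal (greenWeight z) := by
  calc ENNReal.ofReal (r / 2)
      = ENNReal.ofReal (2 * Real.pi * r)⁻¹ * volume (horoballAtOne r) := by
        rw [horoballAtOne, Complex.volume_ball, ← ENNReal.ofReal_pow hr₀.le,
          ← ENNReal.ofReal_coe_nnreal, NNReal.coe_real_pi, ← ENNReal.ofReal_mul (by positivity),
          ← ENNReal.ofReal_mul (by positivity)]
        congr 1
        field_simp
    _ = ∫⁻ _ in horoballAtOne r, ENNReal.ofReal (2 * Real.pi * r)⁻¹ :=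
        (setLIntegral_const _ _).symm
    _ ≤ ∫⁻ z in horoballAtOne r, ENNReal.ofReal (greenWeight z) :=
        setLIntegral_mono measurable_greenWeight.ennreal_ofReal fun z hz ↦
          ENNReal.ofReal_le_ofReal (inv_two_pi_mul_le_greenWeight hr hz)

theorem lintegral_greenWeight_le {r : ℝ} (hr₀ : 0 < r) (hr : r ≤ 1 / 4) :
    ∫⁻ z in horoballAtOne r, ENNReal.ofReal (greenWeight z)
      ≤ ENNReal.ofReal (128 / Real.pi * r) := by
  set P := {w : ℂ | 0 < w.re ∧ w.re < 2 * r ∧ w.im ^ 2 < 2 * r * w.re}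
  have hP : MeasurableSet P := measurableSet_setOfPred.2 (by fun_prop)
  calc ∫⁻ z in horoballAtOne r, ENNReal.ofReal (greenWeight z)
      ≤ ∫⁻ z in horoballAtOne r, ENNReal.ofReal (16 / Real.pi) * ENNReal.ofReal (1 - z).re⁻¹ :=
        setLIntegral_mono (by fun_prop) fun z hz ↦ by
          rw [← ENNReal.ofReal_mul (by positivity)]
          exact ENNReal.ofReal_le_ofReal (greenWeight_le hr₀ hr hz)
    _ ≤ ∫⁻ z in (1 - ·) ⁻¹' P, ENNReal.ofReal (16 / Real.pi) * ENNReal.ofReal (1 - z).re⁻¹ :=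
        lintegral_mono_set (horoballAtOne_subset_parabola hr₀)
    _ = ENNReal.ofReal (16 / Real.pi) * ∫⁻ w in P, ENNReal.ofReal w.re⁻¹ := by
        rw [lintegral_const_mul _ (by fun_prop),
          (Measure.measurePreserving_sub_left volume 1).setLIntegral_comp_preimage hP
            (f := fun w : ℂ ↦ ENNReal.ofReal w.re⁻¹) (by fun_prop)]
    _ = ENNReal.ofReal (128 / Real.pi * r) := by
        rw [lintegral_inv_re_parabola (by linarith) (by linarith),
          ← ENNReal.ofReal_mul (by positivity), ← sq, Real.sqrt_sq (by linarith)]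
        ring_nf

theorem integral_greenWeight_mem_Icc {r : ℝ} (hr₀ : 0 < r) (hr : r ≤ 1 / 4) :
    ∫ z in horoballAtOne r, greenWeight z ∈ Icc (r / 2) (128 / Real.pi * r) := by
  have hnonneg : 0 ≤ᵐ[volume.restrict (horoballAtOne r)] greenWeight :=
    (ae_restrict_iff' Metric.isOpen_ball.measurableSet).2 <| ae_of_all _ fun z hz ↦
      (by positivity : 0 ≤ (2 * Real.pi * r)⁻¹).trans
        (inv_two_pi_mul_le_greenWeight (by linarith) hz)
  have hupper := lintegral_greenWeight_le hr₀ hr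
  rw [integral_eq_lintegral_of_nonneg_ae hnonneg measurable_greenWeight.aestronglyMeasurable]
  exact ⟨(ENNReal.ofReal_le_iff_le_toReal (ne_top_of_le_ne_top ENNReal.ofReal_ne_top hupper)).1
      (ofReal_le_lintegral_greenWeight hr₀ (by linarith)),
    ENNReal.toReal_le_of_le_ofReal (by positivity) hupper⟩

/-- if `B ⊆ 𝔻` is a horoball resting on `1` at hyperbolic distance `R/2`
from the origin, then `∫_B (1/π) log(1/|z|) ρ(z)² dA(z) ≍ e^{-R/2}` for all
sufficiently large `R`, with absolute constants. -/
theorem horoball_green_integral_asymp :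
    ∃ c C R₀ : ℝ, 0 < c ∧ c ≤ C ∧ ∀ R : ℝ, R₀ ≤ R → ∀ r : ℝ, 0 < r → r < 1 / 2 →
      sInf (hypDist0 '' horoballAtOne r) = R / 2 →
      c * Real.exp (-R / 2)
          ≤ ∫ z in horoballAtOne r,
              (1 / Real.pi) * Real.log (1 / ‖z‖) * rho z ^ 2 ∧
        (∫ z in horoballAtOne r,
            (1 / Real.pi) * Real.log (1 / ‖z‖) * rho z ^ 2)
          ≤ C * Real.exp (-R / 2) := by
  refine ⟨1 / 4, 128 / Real.pi, 2 * Real.log 4, by norm_num, ?_, ?_⟩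
  · rw [le_div_iff₀ Real.pi_pos]
    linarith [Real.pi_lt_four]
  intro R hR r hr₀ hr hdist
  rw [sInf_hypDist0_image_horoballAtOne hr₀ hr.le] at hdist
  have hexp : Real.exp (-R / 2) = r / (1 - r) := by
    rw [neg_div, Real.exp_neg, ← hdist, Real.exp_log (div_pos (by linarith) hr₀), inv_div]
  have hr_le : r ≤ Real.exp (-R / 2) := by
    rw [hexp, le_div_iff₀ (by linarith)]
    nlinarith
  have hexp_le : Real.exp (-R / 2) ≤ 2 * r := by
    rw [hexp, div_le_iff₀ (by linarith)]
    nlinarith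
  have hr_small : r ≤ 1 / 4 := by
    calc r ≤ Real.exp (-R / 2) := hr_le
      _ ≤ Real.exp (-Real.log 4) := Real.exp_le_exp.2 (by linarith)
      _ = 1 / 4 := by rw [Real.exp_neg, Real.exp_log (by norm_num), one_div]
  obtain ⟨hlower, hupper⟩ := integral_greenWeight_mem_Icc hr₀ hr_small
  unfold greenWeight at hlower hupper
  constructor
  · linarith
  · calc _ ≤ 128 / Real.pi * r := hupper
      _ ≤ 128 / Real.pi * Real.exp (-R / 2) := by gcongr
end
end

section
/- Suppose β : (0,1) → ℝ satisfies the differential inequality of Becker–Pommerenke type: u(t) = ∫_{A(t)} |f′(z)^p| y⁻¹ dx dy with u″(t) ≤ (M/t²) u(t) + C for t ∈ (0, t₀), where 0 ≤ M < 1/4. Then u(t) = O(t^{-s}) as t → 0⁺ where s = (1 - √(1-4M))/2 ≤ 2M/(1+√(1-4M)) ≤ M·(1+O(M)); in particular limsup_{t→0⁺} log u(t)/log(1/t) ≤ (1-√(1-4M))/2. -/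
/-!
Subtracting `B t²` with `M B + C ≤ 2 B` reduces the inequality to `v'' ≤ M t⁻² v`.
Since `s = (1 - √(1 - 4M)) / 2` solves `s (1 - s) = M`, we have `M ≤ s (s + 1)`, so the barrier
`φ t = t ^ (-s) * (2 b - t)` satisfies `φ'' ≥ M t⁻² φ` on `(0, b]`. For `K` large, `g = K φ - v`
is positive with nonpositive slope at `b`, and `g'' ≥ M t⁻² g` makes `g` convex wherever it is
positive; such a function cannot reach `0` moving left from `b`, so `v < K φ ≤ 2 b K t ^ (-s)`.
Taking logarithms gives the limsup bound.
-/

open Filter Set Topology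

theorem pos_of_deriv2_nonneg_where_pos {g g' g'' : ℝ → ℝ} {a b : ℝ}
    (hg : ∀ t ∈ Ioc a b, HasDerivAt g (g' t) t)
    (hg' : ∀ t ∈ Ioc a b, HasDerivAt g' (g'' t) t)
    (hconvex : ∀ t ∈ Ioo a b, 0 < g t → 0 ≤ g'' t)
    (hgb : 0 < g b) (hg'b : g' b ≤ 0) : ∀ t ∈ Ioc a b, 0 < g t := by
  intro x hx
  by_contra! hgx
  have hsub : Icc x b ⊆ Ioc a b := fun y hy => ⟨hx.1.trans_le hy.1, hy.2⟩
  have hcont : ContinuousOn g (Icc x b) := fun y hy =>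
    (hg y (hsub hy)).continuousAt.continuousWithinAt
  -- `c` is the last zero-or-below point of `g` before `b`; beyond it `g` is positive, hence convex.
  set S := Icc x b ∩ g ⁻¹' Iic 0
  have hS : IsCompact S :=
    isCompact_Icc.of_isClosed_subset (hcont.preimage_isClosed_of_isClosed isClosed_Icc isClosed_Iic)
      inter_subset_left
  obtain ⟨⟨hxc, hcb⟩, hgc⟩ : sSup S ∈ S := hS.sSup_mem ⟨x, ⟨le_rfl, hx.2⟩, hgx⟩
  set c := sSup S
  have hpos : ∀ y ∈ Ioc c b, 0 < g y := fun y hy => by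
    by_contra! hgy
    exact hy.1.not_ge (le_csSup hS.bddAbove ⟨⟨hxc.trans hy.1.le, hy.2⟩, hgy⟩)
  have hsub' : Icc c b ⊆ Ioc a b := (Icc_subset_Icc_left hxc).trans hsub
  have hg'mono : MonotoneOn g' (Icc c b) := by
    refine monotoneOn_of_hasDerivWithinAt_nonneg (f' := g'') (convex_Icc c b)
      (fun y hy => (hg' y (hsub' hy)).continuousAt.continuousWithinAt) ?_ ?_ <;>
      intro y hy <;> rw [interior_Icc] at hy
    · exact (hg' y (hsub' (Ioo_subset_Icc_self hy))).hasDerivWithinAt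
    · exact hconvex y ⟨hx.1.trans_le (hxc.trans hy.1.le), hy.2⟩ (hpos y ⟨hy.1, hy.2.le⟩)
  have hganti : AntitoneOn g (Icc c b) := by
    refine antitoneOn_of_hasDerivWithinAt_nonpos (f' := g') (convex_Icc c b)
      (hcont.mono (Icc_subset_Icc_left hxc)) ?_ ?_ <;> intro y hy <;> rw [interior_Icc] at hy
    · exact (hg y (hsub' (Ioo_subset_Icc_self hy))).hasDerivWithinAt
    · exact (hg'mono (Ioo_subset_Icc_self hy) (right_mem_Icc.2 hcb) hy.2.le).trans hg'b
  exact (hgb.trans_le (hganti (left_mem_Icc.2 hcb) (right_mem_Icc.2 hcb) hcb)).not_ge hgc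

section EulerBarrier

variable {s c t : ℝ}

theorem hasDerivAt_rpow_neg_mul_sub (ht : t ≠ 0) :
    HasDerivAt (fun x => x ^ (-s) * (c - x)) (-s * t ^ (-s - 1) * (c - t) - t ^ (-s)) t := by
  have := (Real.hasDerivAt_rpow_const (p := -s) (Or.inl ht)).mul ((hasDerivAt_id' t).const_sub c)
  exact this.congr_deriv (by ring)

theorem hasDerivAt_deriv_rpow_neg_mul_sub (ht : t ≠ 0) :
    HasDerivAt (fun x => -s * x ^ (-s - 1) * (c - x) - x ^ (-s))
      (s * (s + 1) * t ^ (-s - 2) * (c - t) + 2 * s * t ^ (-s - 1)) t := by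
  have h₁ := Real.hasDerivAt_rpow_const (p := -s - 1) (Or.inl ht)
  rw [show -s - 1 - 1 = -s - 2 by ring] at h₁
  have h₂ := Real.hasDerivAt_rpow_const (p := -s) (Or.inl ht)
  exact (((h₁.const_mul (-s)).mul ((hasDerivAt_id' t).const_sub c)).sub h₂).congr_deriv (by ring)

-- The right-hand side is the second derivative of `t ^ (-s) * (c - t)`.
theorem div_sq_mul_rpow_neg_mul_sub_le {M : ℝ} (hMs : M ≤ s * (s + 1)) (hs : 0 ≤ s)
    (ht : 0 < t) (htc : t ≤ c) :
    M / t ^ 2 * (t ^ (-s) * (c - t)) ≤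
      s * (s + 1) * t ^ (-s - 2) * (c - t) + 2 * s * t ^ (-s - 1) := by
  have hpow : t ^ (-s - 2) = t ^ (-s) / t ^ 2 := by
    rw [Real.rpow_sub ht, Real.rpow_two]
  have : 0 ≤ t ^ (-s) * (c - t) := mul_nonneg (by positivity) (sub_nonneg.2 htc)
  calc M / t ^ 2 * (t ^ (-s) * (c - t))
      ≤ s * (s + 1) / t ^ 2 * (t ^ (-s) * (c - t)) := by gcongr
    _ = s * (s + 1) * t ^ (-s - 2) * (c - t) := by rw [hpow]; ring
    _ ≤ _ := le_add_of_nonneg_right (by positivity)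

end EulerBarrier

theorem exists_le_mul_rpow_of_deriv2_le_div_sq {v v' v'' : ℝ → ℝ} {M s b : ℝ}
    (hM : 0 ≤ M) (hMs : M ≤ s * (s + 1)) (hs : 0 ≤ s) (hb : 0 < b)
    (hv : ∀ t ∈ Ioc 0 b, HasDerivAt v (v' t) t)
    (hv' : ∀ t ∈ Ioc 0 b, HasDerivAt v' (v'' t) t)
    (hineq : ∀ t ∈ Ioo 0 b, v'' t ≤ M / t ^ 2 * v t) :
    ∃ K, 0 < K ∧ ∀ t ∈ Ioc 0 b, v t ≤ K * t ^ (-s) := by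
  set φ : ℝ → ℝ := fun t => t ^ (-s) * (2 * b - t)
  set φ' : ℝ → ℝ := fun t => -s * t ^ (-s - 1) * (2 * b - t) - t ^ (-s)
  set φ'' : ℝ → ℝ := fun t => s * (s + 1) * t ^ (-s - 2) * (2 * b - t) + 2 * s * t ^ (-s - 1)
  have hφb : 0 < φ b := by simp only [φ]; nlinarith [Real.rpow_pos_of_pos hb (-s)]
  have hφ'b : φ' b < 0 := by
    have := mul_nonneg (mul_nonneg hs (Real.rpow_pos_of_pos hb (-s - 1)).le) hb.le
    simp only [φ']
    linarith [Real.rpow_pos_of_pos hb (-s)]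
  obtain ⟨K, hK, hKb, hK'b⟩ : ∃ K : ℝ, 0 < K ∧ v b < K * φ b ∧ K * φ' b ≤ v' b :=
    ((eventually_gt_atTop 0).and
      (((tendsto_id.atTop_mul_const hφb).eventually_gt_atTop (v b)).and
        ((tendsto_id.atTop_mul_const_of_neg hφ'b).eventually_le_atBot (v' b)))).exists
  have hcomp := pos_of_deriv2_nonneg_where_pos (a := 0) (g := fun t => K * φ t - v t)
    (g' := fun t => K * φ' t - v' t) (g'' := fun t => K * φ'' t - v'' t)
    (fun t ht => ((hasDerivAt_rpow_neg_mul_sub ht.1.ne').const_mul K).sub (hv t ht))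
    (fun t ht => ((hasDerivAt_deriv_rpow_neg_mul_sub ht.1.ne').const_mul K).sub (hv' t ht))
    (fun t ht hpos => by
      have hφ := div_sq_mul_rpow_neg_mul_sub_le (c := 2 * b) hMs hs ht.1 (by linarith [ht.2])
      have hKφ := mul_le_mul_of_nonneg_left hφ hK.le
      have hMg : 0 ≤ M / t ^ 2 * (K * φ t - v t) := by positivity
      simp only [φ, φ''] at hMg ⊢
      linarith [hineq t ht]) (by simpa using hKb) (by simpa using hK'b)
  refine ⟨K * (2 * b), by positivity, fun t ht => ?_⟩
  have hφt : K * φ t ≤ K * (2 * b) * t ^ (-s) := by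
    have := Real.rpow_pos_of_pos ht.1 (-s)
    simp only [φ]
    nlinarith [mul_pos (mul_pos hK this) ht.1]
  linarith [hcomp t ht]

theorem exists_le_mul_rpow_of_deriv2_le_div_sq_add {u u' u'' : ℝ → ℝ} {M s b C : ℝ}
    (hM : 0 ≤ M) (hM2 : M < 2) (hMs : M ≤ s * (s + 1)) (hs : 0 ≤ s) (hb : 0 < b) (hb1 : b ≤ 1)
    (hu : ∀ t ∈ Ioc 0 b, HasDerivAt u (u' t) t)
    (hu' : ∀ t ∈ Ioc 0 b, HasDerivAt u' (u'' t) t)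
    (hineq : ∀ t ∈ Ioo 0 b, u'' t ≤ M / t ^ 2 * u t + C) :
    ∃ K, 0 < K ∧ ∀ t ∈ Ioc 0 b, u t ≤ K * t ^ (-s) := by
  obtain ⟨B, hB0, hB⟩ : ∃ B : ℝ, 0 ≤ B ∧ M * B + C ≤ 2 * B := by
    refine ⟨max C 0 / (2 - M), div_nonneg (le_max_right C 0) (by linarith), ?_⟩
    have := mul_div_cancel₀ (max C 0) (sub_pos.2 hM2).ne'
    linarith [le_max_left C 0]
  obtain ⟨K, hK, hv⟩ := exists_le_mul_rpow_of_deriv2_le_div_sq (v := fun t => u t - B * t ^ 2)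
    (v' := fun t => u' t - B * (2 * t)) (v'' := fun t => u'' t - B * 2) hM hMs hs hb
    (fun t ht => (hu t ht).sub (by simpa using (hasDerivAt_pow 2 t).const_mul B))
    (fun t ht => (hu' t ht).sub (by simpa using ((hasDerivAt_id' t).const_mul 2).const_mul B))
    (fun t ht => by
      have hMB : M / t ^ 2 * (B * t ^ 2) = M * B := by field_simp [ht.1.ne']
      linarith [hineq t ht, mul_sub (M / t ^ 2) (u t) (B * t ^ 2)])
  refine ⟨K + B, by positivity, fun t ht => ?_⟩
  have hone_le : 1 ≤ t ^ (-s) :=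
    Real.one_le_rpow_of_pos_of_le_one_of_nonpos ht.1 (ht.2.trans hb1) (by linarith)
  have hsq_le : t ^ 2 ≤ 1 := pow_le_one₀ ht.1.le (ht.2.trans hb1)
  nlinarith [hv t ht]

/-- The hypothesis `0 ≤ s` covers the junk value `limsup f l = 0` when `f` is not bounded below
along `l`. -/
theorem limsup_le_of_forall_eventually_le_add {α : Type*} {f : α → ℝ} {l : Filter α} {s : ℝ}
    (hs : 0 ≤ s) (h : ∀ ε > 0, ∀ᶠ x in l, f x ≤ s + ε) : limsup f l ≤ s := by
  by_cases hf : l.IsCoboundedUnder (· ≤ ·) f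
  · exact le_of_forall_pos_le_add fun ε hε => limsup_le_of_le hf (h ε hε)
  · rw [limsup_eq, Real.sInf_of_not_bddBelow]
    exacts [hs, hf]

theorem limsup_log_div_log_inv_le {u : ℝ → ℝ} {K s : ℝ} (hs : 0 ≤ s) (hK : 0 < K)
    (hu : ∀ᶠ t in 𝓝[>] 0, 0 ≤ u t ∧ u t ≤ K * t ^ (-s)) :
    limsup (fun t => Real.log (u t) / Real.log (1 / t)) (𝓝[>] 0) ≤ s := by
  have hL : Tendsto (fun t : ℝ => Real.log (1 / t)) (𝓝[>] 0) atTop := by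
    refine (tendsto_neg_atBot_atTop.comp Real.tendsto_log_nhdsGT_zero).congr fun t => ?_
    simp [Real.log_inv]
  refine limsup_le_of_forall_eventually_le_add hs fun ε hε => ?_
  filter_upwards [hu, hL.eventually_gt_atTop 0,
    (hL.const_mul_atTop hε).eventually_ge_atTop (Real.log K), self_mem_nhdsWithin]
    with t ⟨hu0, huK⟩ hLt hKt ht
  rw [div_le_iff₀ hLt]
  rcases hu0.eq_or_lt with h | h
  · rw [← h, Real.log_zero]
    exact mul_nonneg (by linarith) hLt.le
  · calc Real.log (u t) ≤ Real.log (K * t ^ (-s)) := Real.log_le_log h huK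
      _ = Real.log K + s * Real.log (1 / t) := by
        rw [Real.log_mul hK.ne' (Real.rpow_pos_of_pos ht _).ne', Real.log_rpow ht, one_div,
          Real.log_inv]
        ring
      _ ≤ (s + ε) * Real.log (1 / t) := by linarith

theorem euler_differential_inequality_general (u u' u'' : ℝ → ℝ) (t₀ M C : ℝ)
    (ht₀ : 0 < t₀) (hM0 : 0 ≤ M) (hM : M < 1 / 4)
    (hnonneg : ∀ t ∈ Ioo 0 t₀, 0 ≤ u t)
    (hderiv : ∀ t ∈ Ioo 0 t₀, HasDerivAt u (u' t) t)
    (hderiv2 : ∀ t ∈ Ioo 0 t₀, HasDerivAt u' (u'' t) t)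
    (hineq : ∀ t ∈ Ioo 0 t₀, u'' t ≤ (M / t ^ 2) * u t + C) :
    (∃ K t₁ : ℝ, 0 < K ∧ 0 < t₁ ∧ t₁ ≤ t₀ ∧ ∀ t ∈ Ioo 0 t₁,
        u t ≤ K * t ^ (-(1 - Real.sqrt (1 - 4 * M)) / 2)) ∧
      limsup (fun t : ℝ => Real.log (u t) / Real.log (1 / t)) (nhdsWithin 0 (Ioi 0))
        ≤ (1 - Real.sqrt (1 - 4 * M)) / 2 := by
  have hσ := Real.sq_sqrt (show 0 ≤ 1 - 4 * M by linarith)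
  have hσ1 := Real.sqrt_le_one.2 (show 1 - 4 * M ≤ 1 by linarith)
  have hs : 0 ≤ (1 - Real.sqrt (1 - 4 * M)) / 2 := by linarith
  have hMs : M ≤ (1 - Real.sqrt (1 - 4 * M)) / 2 * ((1 - Real.sqrt (1 - 4 * M)) / 2 + 1) := by
    nlinarith
  rw [neg_div]
  generalize (1 - Real.sqrt (1 - 4 * M)) / 2 = s at hs hMs ⊢
  obtain ⟨b, hb, hbt₀, hb1⟩ : ∃ b : ℝ, 0 < b ∧ b < t₀ ∧ b ≤ 1 :=
    ⟨min (t₀ / 2) 1, lt_min (by positivity) one_pos, (min_le_left _ _).trans_lt (by linarith),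
      min_le_right _ _⟩
  have hsub : Ioc 0 b ⊆ Ioo 0 t₀ := fun t ht => ⟨ht.1, ht.2.trans_lt hbt₀⟩
  obtain ⟨K, hK, hu⟩ := exists_le_mul_rpow_of_deriv2_le_div_sq_add hM0 (by linarith) hMs hs hb hb1
    (fun t ht => hderiv t (hsub ht)) (fun t ht => hderiv2 t (hsub ht))
    (fun t ht => hineq t (hsub (Ioo_subset_Ioc_self ht)))
  refine ⟨⟨K, b, hK, hb, hbt₀.le, fun t ht => hu t (Ioo_subset_Ioc_self ht)⟩,
    limsup_log_div_log_inv_le hs hK ?_⟩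
  filter_upwards [Ioo_mem_nhdsGT hb] with t ht
  exact ⟨hnonneg t (hsub (Ioo_subset_Ioc_self ht)), hu t (Ioo_subset_Ioc_self ht)⟩

/-- Euler-type differential inequality: if `u ≥ 0` is `C²` on `(0,t₀)`
with `u″(t) ≤ (M/t²) u(t) + C` for some `0 ≤ M < 1/4` and `C ≥ 0`, then, with
`s = (1 - √(1-4M))/2`, one has `u(t) = O(t^{-s})` as `t → 0⁺`; in particular
`limsup_{t→0⁺} log u(t)/log(1/t) ≤ (1 - √(1-4M))/2`. -/
theorem euler_differential_inequality (u u' u'' : ℝ → ℝ) (t₀ M C : ℝ)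
    (ht₀ : 0 < t₀) (hM0 : 0 ≤ M) (hM : M < 1 / 4) (hC : 0 ≤ C)
    (hnonneg : ∀ t ∈ Ioo 0 t₀, 0 ≤ u t)
    (hderiv : ∀ t ∈ Ioo 0 t₀, HasDerivAt u (u' t) t)
    (hderiv2 : ∀ t ∈ Ioo 0 t₀, HasDerivAt u' (u'' t) t)
    (hineq : ∀ t ∈ Ioo 0 t₀, u'' t ≤ (M / t ^ 2) * u t + C) :
    (∃ K t₁ : ℝ, 0 < K ∧ 0 < t₁ ∧ t₁ ≤ t₀ ∧ ∀ t ∈ Ioo 0 t₁,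
        u t ≤ K * t ^ (-(1 - Real.sqrt (1 - 4 * M)) / 2)) ∧
      limsup (fun t : ℝ => Real.log (u t) / Real.log (1 / t)) (nhdsWithin 0 (Ioi 0))
        ≤ (1 - Real.sqrt (1 - 4 * M)) / 2 :=
  euler_differential_inequality_general u u' u'' t₀ M C ht₀ hM0 hM hnonneg hderiv hderiv2 hineq
end
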